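/- Let ν > 0, λ ≥ 0, β ∈ ℂ, and let v : (0,1] → ℂ be a continuous function satisfying, for all r ∈ (0,1], the integral identity v(r) = r^{ν}( β - λ ∫_0^r (s^{1-ν}/(2ν)) v(s) ds ) + λ r^{-ν} ∫_0^r (s^{1+ν}/(2ν)) v(s) ds, where the integrals are assumed finite. Suppose also that r ↦ r^{-ν} v(r) is bounded on (0,1]. Then |v(r)| ≤ |β| e^{λ/ν} r^{ν} for all r ∈ (0,1]. -/

import Mathlib

/-!
With `w s = s^{-ν} ‖v s‖`, the kernels satisfy `s^{1-ν} ‖v s‖ = s w s ≤ w s` and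
`s^{1+ν} ‖v s‖ = s^{1+2ν} w s ≤ r^{2ν} w s` for `s ≤ r ≤ 1`, so the integral identity gives
`w r ≤ |β| + (λ/ν) ∫₀ʳ w`. Iterating this inequality from the a priori bound `w ≤ M` yields
`w r ≤ |β| e^{cr} + M (cr)ⁿ/n!` with `c = λ/ν`, and letting `n → ∞` gives `w r ≤ |β| e^{λ/ν}`.
-/

open Set MeasureTheory intervalIntegral

open Real Filter Topology
open scoped Nat

section Gronwall

/-- The bound obtained after `n` Picard iterations of `w r ≤ b + c ∫₀ʳ w` from `w ≤ M`. -/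
noncomputable def gronwallIterate (b c M : ℝ) (n : ℕ) (r : ℝ) : ℝ :=
  b * exp (c * r) + M * (c * r) ^ n / n !

lemma hasDerivAt_gronwallIterate_succ (b c M : ℝ) (n : ℕ) (s : ℝ) :
    HasDerivAt (gronwallIterate b c M (n + 1)) (c * gronwallIterate b c M n s) s := by
  have hlin : HasDerivAt (fun s => c * s) c s := by simpa using (hasDerivAt_id s).const_mul c
  refine (((hlin.exp).const_mul b).add (((hlin.pow (n + 1)).const_mul M).div_const
    ((n + 1)! : ℝ))).congr_deriv ?_
  rw [gronwallIterate, Nat.factorial_succ]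
  push_cast
  field_simp

lemma mul_integral_gronwallIterate (b c M : ℝ) (n : ℕ) (r : ℝ) :
    c * ∫ s in 0..r, gronwallIterate b c M n s = gronwallIterate b c M (n + 1) r - b := by
  rw [← intervalIntegral.integral_const_mul, integral_eq_sub_of_hasDerivAt
    (fun s _ => hasDerivAt_gronwallIterate_succ b c M n s)
    (Continuous.intervalIntegrable (by unfold gronwallIterate; fun_prop) _ _)]
  simp [gronwallIterate]

lemma tendsto_gronwallIterate (b c M r : ℝ) :
    Tendsto (fun n => gronwallIterate b c M n r) atTop (𝓝 (b * exp (c * r))) := by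
  simpa [gronwallIterate, mul_div_assoc] using
    ((FloorSemiring.tendsto_pow_div_factorial_atTop (c * r)).const_mul M).const_add
      (b * exp (c * r))

variable {w : ℝ → ℝ} {a b c M : ℝ}

lemma le_gronwallIterate_of_le_add_mul_integral (hb : 0 ≤ b) (hc : 0 ≤ c)
    (hint : IntervalIntegrable w volume 0 a) (hM : ∀ s ∈ Ioc 0 a, w s ≤ M)
    (hw : ∀ r ∈ Ioc 0 a, w r ≤ b + c * ∫ s in 0..r, w s) (n : ℕ) :
    ∀ r ∈ Ioc 0 a, w r ≤ gronwallIterate b c M n r := by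
  induction n with
  | zero =>
    intro r hr
    have : 0 ≤ b * exp (c * r) := by positivity
    simpa [gronwallIterate] using (hM r hr).trans (le_add_of_nonneg_left this)
  | succ n ih =>
    intro r hr
    have hint_r : IntervalIntegrable w volume 0 r := hint.mono_set <| by
      rw [uIcc_of_le hr.1.le, uIcc_of_le (hr.1.le.trans hr.2)]; exact Icc_subset_Icc_right hr.2
    have hmono : ∫ s in 0..r, w s ≤ ∫ s in 0..r, gronwallIterate b c M n s :=
      integral_mono_on_of_le_Ioo hr.1.le hint_r
        (Continuous.intervalIntegrable (by unfold gronwallIterate; fun_prop) _ _)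
        fun s hs => ih s ⟨hs.1, hs.2.le.trans hr.2⟩
    calc w r ≤ b + c * ∫ s in 0..r, w s := hw r hr
      _ ≤ b + c * ∫ s in 0..r, gronwallIterate b c M n s := by gcongr
      _ = gronwallIterate b c M (n + 1) r := by rw [mul_integral_gronwallIterate]; ring

theorem le_mul_exp_of_le_add_mul_integral (hb : 0 ≤ b) (hc : 0 ≤ c)
    (hint : IntervalIntegrable w volume 0 a) (hM : ∀ s ∈ Ioc 0 a, w s ≤ M)
    (hw : ∀ r ∈ Ioc 0 a, w r ≤ b + c * ∫ s in 0..r, w s) :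
    ∀ r ∈ Ioc 0 a, w r ≤ b * exp (c * r) := fun r hr =>
  ge_of_tendsto (tendsto_gronwallIterate b c M r) <| Eventually.of_forall fun n =>
    le_gronwallIterate_of_le_add_mul_integral hb hc hint hM hw n r hr

end Gronwall

lemma intervalIntegrable_of_continuousOn_Ioc_of_norm_le {E : Type*} [NormedAddCommGroup E]
    {f : ℝ → E} {a b M : ℝ} (hab : a ≤ b) (hf : ContinuousOn f (Ioc a b))
    (hM : ∀ s ∈ Ioc a b, ‖f s‖ ≤ M) : IntervalIntegrable f volume a b := by
  rw [intervalIntegrable_iff_integrableOn_Ioc_of_le hab]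
  refine IntegrableOn.of_bound measure_Ioc_lt_top (hf.aestronglyMeasurable measurableSet_Ioc) M ?_
  exact (ae_restrict_iff' measurableSet_Ioc).mpr (Eventually.of_forall hM)

lemma norm_integral_le_mul_integral {E : Type*} [NormedAddCommGroup E] [NormedSpace ℝ E]
    {f : ℝ → E} {g : ℝ → ℝ} {a b C : ℝ} (hab : a ≤ b) (hg : IntervalIntegrable g volume a b)
    (hfg : ∀ s ∈ Ioc a b, ‖f s‖ ≤ C * g s) :
    ‖∫ s in a..b, f s‖ ≤ C * ∫ s in a..b, g s := by
  rw [← intervalIntegral.integral_const_mul]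
  exact norm_integral_le_of_norm_le hab (Eventually.of_forall hfg) (hg.const_mul C)

lemma norm_ofReal_mul_of_nonneg {x : ℝ} (hx : 0 ≤ x) (z : ℂ) : ‖(x : ℂ) * z‖ = x * ‖z‖ := by
  rw [norm_mul, Complex.norm_real, Real.norm_of_nonneg hx]

section BesselKernel

variable {ν s : ℝ} {v : ℝ → ℂ}

lemma norm_kernel_sub_mul_le (hν : 0 < ν) (hs : s ∈ Ioc 0 1) :
    ‖((s ^ (1 - ν) / (2 * ν) : ℝ) : ℂ) * v s‖ ≤ 1 / (2 * ν) * (s ^ (-ν) * ‖v s‖) := by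
  obtain ⟨hs0, hs1⟩ := hs
  have hsplit : s ^ (1 - ν) = s * s ^ (-ν) := by
    rw [sub_eq_add_neg, Real.rpow_add hs0, Real.rpow_one]
  rw [norm_ofReal_mul_of_nonneg (by positivity), hsplit]
  have : 0 ≤ s ^ (-ν) * ‖v s‖ / (2 * ν) := by positivity
  calc s * s ^ (-ν) / (2 * ν) * ‖v s‖ = s * (s ^ (-ν) * ‖v s‖ / (2 * ν)) := by ring
    _ ≤ 1 * (s ^ (-ν) * ‖v s‖ / (2 * ν)) := by gcongr
    _ = _ := by ring

lemma norm_kernel_add_mul_le {r : ℝ} (hν : 0 < ν) (hs : s ∈ Ioc 0 r) (hr : r ≤ 1) :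
    ‖((s ^ (1 + ν) / (2 * ν) : ℝ) : ℂ) * v s‖ ≤ r ^ (2 * ν) / (2 * ν) * (s ^ (-ν) * ‖v s‖) := by
  obtain ⟨hs0, hsr⟩ := hs
  have hsplit : s ^ (1 + ν) = s * s ^ (2 * ν) * s ^ (-ν) := by
    rw [← Real.rpow_one_add' hs0.le (by positivity), ← Real.rpow_add hs0]; ring_nf
  rw [norm_ofReal_mul_of_nonneg (by positivity), hsplit]
  have : 0 ≤ s ^ (-ν) * ‖v s‖ / (2 * ν) := by positivity
  have hpow : s ^ (2 * ν) ≤ r ^ (2 * ν) := Real.rpow_le_rpow hs0.le hsr (by positivity)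
  calc s * s ^ (2 * ν) * s ^ (-ν) / (2 * ν) * ‖v s‖
        = s * s ^ (2 * ν) * (s ^ (-ν) * ‖v s‖ / (2 * ν)) := by ring
    _ ≤ 1 * r ^ (2 * ν) * (s ^ (-ν) * ‖v s‖ / (2 * ν)) := by
        gcongr
        exact hsr.trans hr
    _ = _ := by ring

lemma rpow_neg_mul_norm_le_of_eq {lam r : ℝ} {β z I₁ I₂ : ℂ} (hr : 0 < r) (hlam : 0 ≤ lam)
    (hz : z = ((r ^ ν : ℝ) : ℂ) * (β - (lam : ℂ) * I₁) + (lam : ℂ) * ((r ^ (-ν) : ℝ) : ℂ) * I₂) :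
    r ^ (-ν) * ‖z‖ ≤ ‖β‖ + lam * ‖I₁‖ + lam * (r ^ (-ν) * r ^ (-ν)) * ‖I₂‖ := by
  have hinv : r ^ (-ν) * r ^ ν = 1 := by rw [← Real.rpow_add hr]; simp
  have hnorm : ‖z‖ ≤ r ^ ν * (‖β‖ + lam * ‖I₁‖) + lam * r ^ (-ν) * ‖I₂‖ := by
    rw [hz, ← Complex.ofReal_mul]
    refine (norm_add_le _ _).trans (add_le_add ?_ ?_)
    · rw [norm_ofReal_mul_of_nonneg (by positivity)]
      gcongr
      exact (norm_sub_le _ _).trans_eq (by rw [norm_ofReal_mul_of_nonneg hlam])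
    · rw [norm_ofReal_mul_of_nonneg (by positivity)]
  calc r ^ (-ν) * ‖z‖ ≤ r ^ (-ν) * (r ^ ν * (‖β‖ + lam * ‖I₁‖) + lam * r ^ (-ν) * ‖I₂‖) := by
        gcongr
    _ = _ := by linear_combination (‖β‖ + lam * ‖I₁‖) * hinv

lemma rpow_neg_mul_norm_le_add_mul_integral {lam : ℝ} {β : ℂ} (hν : 0 < ν) (hlam : 0 ≤ lam)
    (hint : IntervalIntegrable (fun s => s ^ (-ν) * ‖v s‖) volume 0 1)
    (hrep : ∀ r ∈ Ioc (0 : ℝ) 1,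
      v r = ((r ^ ν : ℝ) : ℂ) *
              (β - (lam : ℂ) * ∫ s in (0 : ℝ)..r, ((s ^ (1 - ν) / (2 * ν) : ℝ) : ℂ) * v s)
          + (lam : ℂ) * ((r ^ (-ν) : ℝ) : ℂ) *
              ∫ s in (0 : ℝ)..r, ((s ^ (1 + ν) / (2 * ν) : ℝ) : ℂ) * v s) :
    ∀ r ∈ Ioc (0 : ℝ) 1,
      r ^ (-ν) * ‖v r‖ ≤ ‖β‖ + lam / ν * ∫ s in 0..r, s ^ (-ν) * ‖v s‖ := by
  intro r hr
  have hr0 : 0 < r := hr.1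
  set X := ∫ s in 0..r, s ^ (-ν) * ‖v s‖
  have hint_r : IntervalIntegrable (fun s => s ^ (-ν) * ‖v s‖) volume 0 r := hint.mono_set <| by
    rw [uIcc_of_le hr0.le, uIcc_of_le zero_le_one]; exact Icc_subset_Icc_right hr.2
  have h₁ := norm_integral_le_mul_integral hr0.le hint_r
    fun s hs => norm_kernel_sub_mul_le (v := v) hν ⟨hs.1, hs.2.trans hr.2⟩
  have h₂ := norm_integral_le_mul_integral hr0.le hint_r
    fun s hs => norm_kernel_add_mul_le (v := v) hν hs hr.2
  have hcancel : r ^ (-ν) * r ^ (-ν) * r ^ (2 * ν) = 1 := by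
    rw [← Real.rpow_add hr0, ← Real.rpow_add hr0]; ring_nf; simp
  calc r ^ (-ν) * ‖v r‖ ≤ _ := rpow_neg_mul_norm_le_of_eq hr0 hlam (hrep r hr)
    _ ≤ ‖β‖ + lam * (1 / (2 * ν) * X)
        + lam * (r ^ (-ν) * r ^ (-ν)) * (r ^ (2 * ν) / (2 * ν) * X) := by
      gcongr
    _ = ‖β‖ + lam / ν * X := by
      field_simp
      linear_combination lam * X * hcancel

end BesselKernel

theorem gronwall_bessel_bound_general (ν lam : ℝ) (hν : 0 < ν) (hlam : 0 ≤ lam) (β : ℂ)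
    (v : ℝ → ℂ) (hcont : ContinuousOn v (Set.Ioc (0:ℝ) 1))
    (hrep : ∀ r ∈ Set.Ioc (0:ℝ) 1,
      v r = ((r ^ ν : ℝ) : ℂ) *
              (β - (lam:ℂ) * ∫ s in (0:ℝ)..r, ((s ^ (1 - ν) / (2*ν) : ℝ) : ℂ) * v s)
          + (lam:ℂ) * ((r ^ (-ν) : ℝ) : ℂ) *
              ∫ s in (0:ℝ)..r, ((s ^ (1 + ν) / (2*ν) : ℝ) : ℂ) * v s)
    (hbdd : ∃ M : ℝ, ∀ r ∈ Set.Ioc (0:ℝ) 1, r ^ (-ν) * ‖v r‖ ≤ M) :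
    ∀ r ∈ Set.Ioc (0:ℝ) 1, ‖v r‖ ≤ ‖β‖ * Real.exp (lam/ν) * r ^ ν := by
  obtain ⟨M, hM⟩ := hbdd
  have hint : IntervalIntegrable (fun s => s ^ (-ν) * ‖v s‖) volume 0 1 :=
    intervalIntegrable_of_continuousOn_Ioc_of_norm_le zero_le_one
      ((continuousOn_id.rpow_const fun s hs => Or.inl hs.1.ne').mul hcont.norm)
      fun s hs => (Real.norm_of_nonneg (by have := hs.1; positivity)).trans_le (hM s hs)
  have hgronwall := le_mul_exp_of_le_add_mul_integral (norm_nonneg β) (by positivity) hint hM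
    (rpow_neg_mul_norm_le_add_mul_integral hν hlam hint hrep)
  intro r hr
  have hr0 : 0 < r := hr.1
  have hw : r ^ (-ν) * ‖v r‖ ≤ ‖β‖ * exp (lam / ν) := (hgronwall r hr).trans <| by
    gcongr
    exact mul_le_of_le_one_right (by positivity) hr.2
  calc ‖v r‖ = r ^ ν * (r ^ (-ν) * ‖v r‖) := by rw [← mul_assoc, ← Real.rpow_add hr0]; simp
    _ ≤ ‖β‖ * exp (lam / ν) * r ^ ν := by rw [mul_comm]; gcongr

/-- Gronwall-type estimate: if a continuous `v : (0,1] → ℂ` satisfies the integral identity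
`v(r) = r^ν (β - λ ∫_0^r (s^{1-ν}/(2ν)) v ds) + λ r^{-ν} ∫_0^r (s^{1+ν}/(2ν)) v ds`
and `r ↦ r^{-ν} v(r)` is bounded on `(0,1]`, then `|v(r)| ≤ |β| e^{λ/ν} r^ν`. -/
theorem gronwall_bessel_bound (ν lam : ℝ) (hν : 0 < ν) (hlam : 0 ≤ lam) (β : ℂ)
    (v : ℝ → ℂ) (hcont : ContinuousOn v (Set.Ioc (0:ℝ) 1))
    (hint1 : ∀ r ∈ Set.Ioc (0:ℝ) 1,
      IntervalIntegrable (fun s : ℝ => ((s ^ (1 - ν) / (2*ν) : ℝ) : ℂ) * v s)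
        MeasureTheory.volume 0 r)
    (hint2 : ∀ r ∈ Set.Ioc (0:ℝ) 1,
      IntervalIntegrable (fun s : ℝ => ((s ^ (1 + ν) / (2*ν) : ℝ) : ℂ) * v s)
        MeasureTheory.volume 0 r)
    (hrep : ∀ r ∈ Set.Ioc (0:ℝ) 1,
      v r = ((r ^ ν : ℝ) : ℂ) *
              (β - (lam:ℂ) * ∫ s in (0:ℝ)..r, ((s ^ (1 - ν) / (2*ν) : ℝ) : ℂ) * v s)
          + (lam:ℂ) * ((r ^ (-ν) : ℝ) : ℂ) *
              ∫ s in (0:ℝ)..r, ((s ^ (1 + ν) / (2*ν) : ℝ) : ℂ) * v s)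
    (hbdd : ∃ M : ℝ, ∀ r ∈ Set.Ioc (0:ℝ) 1, r ^ (-ν) * ‖v r‖ ≤ M) :
    ∀ r ∈ Set.Ioc (0:ℝ) 1, ‖v r‖ ≤ ‖β‖ * Real.exp (lam/ν) * r ^ ν :=
  gronwall_bessel_bound_general ν lam hν hlam β v hcont hrep hbdd
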